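/- arXiv:quant-ph/0611096 — 5 statements merged into one kernel-verified Lean document; each statement's English description precedes it below -/
import Mathlib

section
/- (Necessity direction of the probabilistic transformation condition.) Let H, K, W be finite-dimensional complex inner product spaces, let φ_1,…,φ_n ∈ H and χ_1,…,χ_n ∈ K be unit vectors, and let η_1,…,η_n ≥ 0. Suppose there is an isometric realization of the transformation φ_i ↦ χ_i with success probabilities η_i, i.e. a linear isometry U : H → W, a linear isometry J : K → W, and vectors β_1,…,β_n ∈ W each orthogonal to the range of J, such that U φ_i = √η_i · (J χ_i) + β_i for all i. Then the n×n complex matrix M with entries M_{ij} = ⟨φ_i, φ_j⟩ − √(η_i η_j) ⟨χ_i, χ_j⟩ is positive semidefinite (indeed M is the Gram matrix of (β_1,…,β_n)), and in particular η_i ≤ 1 for every i. -/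
open scoped ComplexOrder

/-!
Since `U` is an isometry, `⟪φᵢ, φⱼ⟫ = ⟪U φᵢ, U φⱼ⟫`; expanding with `U φᵢ = √ηᵢ • J χᵢ + βᵢ`, the
cross terms vanish because each `βᵢ` is orthogonal to the range of the isometry `J`, leaving
`√(ηᵢ ηⱼ) ⟨χᵢ, χⱼ⟩ + ⟨βᵢ, βⱼ⟩`. So `M` is the Gram matrix of `β`, hence positive semidefinite, and
its diagonal gives `1 - ηᵢ = ‖βᵢ‖² ≥ 0`.
-/

open scoped InnerProductSpace

section IsometricDecomposition

variable {𝕜 E F W : Type*} [RCLike 𝕜]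
  [NormedAddCommGroup E] [InnerProductSpace 𝕜 E]
  [NormedAddCommGroup F] [InnerProductSpace 𝕜 F]
  [NormedAddCommGroup W] [InnerProductSpace 𝕜 W]
  (U : E →ₗᵢ[𝕜] W) (J : F →ₗᵢ[𝕜] W)

theorem inner_eq_of_map_eq_smul_add {x x' : E} {y y' : F} {a a' : 𝕜} {b b' : W}
    (hb : ∀ z, ⟪J z, b⟫_𝕜 = 0) (hb' : ∀ z, ⟪J z, b'⟫_𝕜 = 0)
    (hx : U x = a • J y + b) (hx' : U x' = a' • J y' + b') :
    ⟪x, x'⟫_𝕜 = (starRingEnd 𝕜) a * a' * ⟪y, y'⟫_𝕜 + ⟪b, b'⟫_𝕜 := by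
  have hb_left : ⟪b, J y'⟫_𝕜 = 0 := by rw [← inner_conj_symm, hb, map_zero]
  rw [← U.inner_map_map, hx, hx']
  simp only [inner_add_left, inner_add_right, inner_smul_left, inner_smul_right,
    J.inner_map_map, hb_left, hb', mul_zero, add_zero]
  ring

theorem norm_sq_eq_of_map_eq_smul_add {x : E} {y : F} {a : 𝕜} {b : W}
    (hb : ∀ z, ⟪J z, b⟫_𝕜 = 0) (hx : U x = a • J y + b) :
    ‖x‖ ^ 2 = ‖a‖ ^ 2 * ‖y‖ ^ 2 + ‖b‖ ^ 2 := by
  have hperp : ⟪a • J y, b⟫_𝕜 = 0 := by rw [inner_smul_left, hb, mul_zero]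
  simp only [sq]
  rw [← U.norm_map, hx, norm_add_sq_eq_norm_sq_add_norm_sq_of_inner_eq_zero _ _ hperp,
    norm_smul, J.norm_map]
  ring

end IsometricDecomposition

theorem posSemidef_of_isometric_realization_general {n : ℕ} {H K W : Type*}
    [NormedAddCommGroup H] [InnerProductSpace ℂ H]
    [NormedAddCommGroup K] [InnerProductSpace ℂ K]
    [NormedAddCommGroup W] [InnerProductSpace ℂ W]
    (φ : Fin n → H) (χ : Fin n → K) (η : Fin n → ℝ)
    (hφ : ∀ i, ‖φ i‖ = 1) (hχ : ∀ i, ‖χ i‖ = 1) (hη : ∀ i, 0 ≤ η i)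
    (U : H →ₗᵢ[ℂ] W) (J : K →ₗᵢ[ℂ] W) (β : Fin n → W)
    (hβ : ∀ i, ∀ x : K, (inner ℂ (J x) (β i) : ℂ) = 0)
    (hU : ∀ i, U (φ i) = (Real.sqrt (η i) : ℂ) • J (χ i) + β i) :
    (Matrix.of fun i j =>
        (inner ℂ (φ i) (φ j) : ℂ)
          - (Real.sqrt (η i * η j) : ℂ) * (inner ℂ (χ i) (χ j) : ℂ)).PosSemidef
      ∧ (∀ i j,
          (inner ℂ (φ i) (φ j) : ℂ)
            - (Real.sqrt (η i * η j) : ℂ) * (inner ℂ (χ i) (χ j) : ℂ)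
            = (inner ℂ (β i) (β j) : ℂ))
      ∧ (∀ i, η i ≤ 1) := by
  have hgram : ∀ i j, (inner ℂ (φ i) (φ j) : ℂ)
      - (Real.sqrt (η i * η j) : ℂ) * (inner ℂ (χ i) (χ j) : ℂ) = inner ℂ (β i) (β j) := by
    intro i j
    rw [inner_eq_of_map_eq_smul_add U J (hβ i) (hβ j) (hU i) (hU j), Complex.conj_ofReal,
      Real.sqrt_mul (hη i), Complex.ofReal_mul]
    ring
  refine ⟨?_, hgram, fun i => ?_⟩
  · have hM : Matrix.gram ℂ β = Matrix.of fun i j =>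
        (inner ℂ (φ i) (φ j) : ℂ) - (Real.sqrt (η i * η j) : ℂ) * (inner ℂ (χ i) (χ j) : ℂ) :=
      Matrix.ext fun i j => (hgram i j).symm
    exact hM ▸ Matrix.posSemidef_gram ℂ β
  · have hnorm := norm_sq_eq_of_map_eq_smul_add U J (hβ i) (hU i)
    rw [hφ, hχ, Complex.norm_real, Real.norm_of_nonneg (Real.sqrt_nonneg _),
      Real.sq_sqrt (hη i)] at hnorm
    nlinarith [sq_nonneg ‖β i‖]

/-- necessity direction of the probabilistic transformation condition.
If a linear isometry `U : H → W`, a linear isometry `J : K → W` and vectors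
`β₁, …, βₙ ∈ W`, each orthogonal to the range of `J`, realize the transformation
`φᵢ ↦ χᵢ` of unit vectors with success probabilities `ηᵢ ≥ 0`, i.e.
`U φᵢ = √ηᵢ • (J χᵢ) + βᵢ`, then the matrix `M` with entries
`Mᵢⱼ = ⟨φᵢ, φⱼ⟩ − √(ηᵢ ηⱼ) ⟨χᵢ, χⱼ⟩` is positive semidefinite; indeed `M` is the
Gram matrix of `(β₁, …, βₙ)`, and in particular `ηᵢ ≤ 1` for every `i`. -/
theorem posSemidef_of_isometric_realization {n : ℕ} {H K W : Type*}
    [NormedAddCommGroup H] [InnerProductSpace ℂ H] [FiniteDimensional ℂ H]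
    [NormedAddCommGroup K] [InnerProductSpace ℂ K] [FiniteDimensional ℂ K]
    [NormedAddCommGroup W] [InnerProductSpace ℂ W] [FiniteDimensional ℂ W]
    (φ : Fin n → H) (χ : Fin n → K) (η : Fin n → ℝ)
    (hφ : ∀ i, ‖φ i‖ = 1) (hχ : ∀ i, ‖χ i‖ = 1) (hη : ∀ i, 0 ≤ η i)
    (U : H →ₗᵢ[ℂ] W) (J : K →ₗᵢ[ℂ] W) (β : Fin n → W)
    (hβ : ∀ i, ∀ x : K, (inner ℂ (J x) (β i) : ℂ) = 0)
    (hU : ∀ i, U (φ i) = (Real.sqrt (η i) : ℂ) • J (χ i) + β i) :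
    (Matrix.of fun i j =>
        (inner ℂ (φ i) (φ j) : ℂ)
          - (Real.sqrt (η i * η j) : ℂ) * (inner ℂ (χ i) (χ j) : ℂ)).PosSemidef
      ∧ (∀ i j,
          (inner ℂ (φ i) (φ j) : ℂ)
            - (Real.sqrt (η i * η j) : ℂ) * (inner ℂ (χ i) (χ j) : ℂ)
            = (inner ℂ (β i) (β j) : ℂ))
      ∧ (∀ i, η i ≤ 1) :=
  posSemidef_of_isometric_realization_general φ χ η hφ hχ hη U J β hβ hU
end

section
/- (Sufficiency direction of the probabilistic transformation condition.) Let H and K be finite-dimensional complex inner product spaces, let φ_1,…,φ_n ∈ H and χ_1,…,χ_n ∈ K be unit vectors, and let η_1,…,η_n ≥ 0. If the n×n complex matrix M with entries M_{ij} = ⟨φ_i, φ_j⟩ − √(η_i η_j) ⟨χ_i, χ_j⟩ is positive semidefinite, then there exists an isometric realization of the transformation φ_i ↦ χ_i with success probabilities η_i: a finite-dimensional complex inner product space W, a linear isometry U : H → W, a linear isometry J : K → W, and vectors β_1,…,β_n ∈ W each orthogonal to the range of J, such that U φ_i = √η_i · (J χ_i) + β_i for all i. -/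
/-!
The matrix `M` is positive semidefinite, hence the Gram matrix of some vectors `bᵢ ∈ ℂⁿ`.
Then `φᵢ` and `(√ηᵢ χᵢ, bᵢ) ∈ K ⊕ ℂⁿ` have the same Gram matrix, so `φᵢ ↦ (√ηᵢ χᵢ, bᵢ)` is an
isometry from the span of the `φᵢ`; extended by the identity on the orthogonal complement, it
gives `U : H → (K ⊕ ℂⁿ) ⊕ H`, and one takes `J x = (x, 0, 0)` and `βᵢ = (0, bᵢ, 0)`.
-/

open Matrix
open scoped InnerProductSpace ENNReal ComplexOrder

namespace Matrix

variable {𝕜 ι : Type*} [RCLike 𝕜]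

open scoped MatrixOrder in
theorem PosSemidef.exists_gram_eq [Fintype ι] {A : Matrix ι ι 𝕜} (hA : A.PosSemidef) :
    ∃ v : ι → EuclideanSpace 𝕜 ι, gram 𝕜 v = A := by
  classical
  obtain ⟨B, rfl⟩ := CStarAlgebra.nonneg_iff_eq_star_mul_self.mp hA.nonneg
  refine ⟨fun i => WithLp.toLp 2 (fun k => B k i), ?_⟩
  ext i j
  simp [PiLp.inner_apply, mul_apply, mul_comm]

theorem gram_toLp_prod {E F : Type*}
    [NormedAddCommGroup E] [InnerProductSpace 𝕜 E] [NormedAddCommGroup F] [InnerProductSpace 𝕜 F]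
    (x : ι → E) (y : ι → F) :
    gram 𝕜 (fun i => WithLp.toLp 2 (x i, y i)) = gram 𝕜 x + gram 𝕜 y := by
  ext i j
  simp [WithLp.prod_inner_apply]

end Matrix

section GramEq

variable {𝕜 ι E F : Type*} [RCLike 𝕜] [Fintype ι]
  [NormedAddCommGroup E] [InnerProductSpace 𝕜 E] [NormedAddCommGroup F] [InnerProductSpace 𝕜 F]
  {v : ι → E} {w : ι → F}

theorem inner_linearCombination_eq_of_gram_eq (h : gram 𝕜 v = gram 𝕜 w) (c d : ι → 𝕜) :
    ⟪Fintype.linearCombination 𝕜 v c, Fintype.linearCombination 𝕜 v d⟫_𝕜 =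
      ⟪Fintype.linearCombination 𝕜 w c, Fintype.linearCombination 𝕜 w d⟫_𝕜 := by
  simp only [Fintype.linearCombination_apply, ← star_dotProduct_gram_mulVec, h]

theorem exists_linearIsometry_span_of_gram_eq (h : gram 𝕜 v = gram 𝕜 w) :
    ∃ L : Submodule.span 𝕜 (Set.range v) →ₗᵢ[𝕜] F,
      ∀ i, L ⟨v i, Submodule.subset_span (Set.mem_range_self i)⟩ = w i := by
  set S := Fintype.linearCombination 𝕜 v
  set T := Fintype.linearCombination 𝕜 w
  have hker : LinearMap.ker S ≤ LinearMap.ker T := fun c hc => by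
    rw [LinearMap.mem_ker, ← inner_self_eq_zero (𝕜 := 𝕜),
      ← inner_linearCombination_eq_of_gram_eq h, LinearMap.mem_ker.mp hc, inner_zero_left]
  let L₀ : LinearMap.range S →ₗ[𝕜] F :=
    (LinearMap.ker S).liftQ T hker ∘ₗ S.quotKerEquivRange.symm.toLinearMap
  have hL₀ : ∀ c, L₀ ⟨S c, LinearMap.mem_range_self S c⟩ = T c := fun c => by
    simp [L₀]
  have hL₀_inner : ∀ x y, ⟪L₀ x, L₀ y⟫_𝕜 = ⟪x, y⟫_𝕜 := by
    rintro ⟨_, c, rfl⟩ ⟨_, d, rfl⟩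
    rw [hL₀, hL₀, ← inner_linearCombination_eq_of_gram_eq h]
    rfl
  refine ⟨(L₀.isometryOfInner hL₀_inner).comp
    (LinearIsometryEquiv.ofEq _ _ (Fintype.range_linearCombination 𝕜 v).symm).toLinearIsometry,
    fun i => ?_⟩
  classical
  have hvi := hL₀ (Pi.single i 1)
  simp only [S, T, Fintype.linearCombination_apply_single, one_smul] at hvi
  exact hvi

end GramEq

namespace WithLp

variable (p : ℝ≥0∞) [Fact (1 ≤ p)] (𝕜 α β : Type*) [Semiring 𝕜]
  [SeminormedAddCommGroup α] [Module 𝕜 α] [SeminormedAddCommGroup β] [Module 𝕜 β]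

noncomputable def inlₗᵢ : α →ₗᵢ[𝕜] WithLp p (α × β) where
  toLinearMap := (WithLp.linearEquiv p 𝕜 (α × β)).symm.toLinearMap ∘ₗ LinearMap.inl 𝕜 α β
  norm_map' := norm_toLp_fst p α β

variable {α β} in
@[simp]
theorem inlₗᵢ_apply (x : α) : inlₗᵢ p 𝕜 α β x = toLp p (x, 0) :=
  rfl

end WithLp

namespace LinearIsometry

variable {𝕜 E F : Type*} [RCLike 𝕜]
  [NormedAddCommGroup E] [InnerProductSpace 𝕜 E] [NormedAddCommGroup F] [InnerProductSpace 𝕜 F]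
  {K : Submodule 𝕜 E} [K.HasOrthogonalProjection]

noncomputable def prodOrthogonal (L : K →ₗᵢ[𝕜] F) : E →ₗᵢ[𝕜] WithLp 2 (F × E) :=
  (L.withLpProdMap 2 Kᗮ.subtypeₗᵢ).comp K.orthogonalDecomposition.toLinearIsometry

theorem prodOrthogonal_apply_of_mem (L : K →ₗᵢ[𝕜] F) {x : E} (hx : x ∈ K) :
    L.prodOrthogonal x = WithLp.toLp 2 (L ⟨x, hx⟩, 0) := by
  simp [prodOrthogonal, Submodule.orthogonalProjectionOnto_mem_subspace_eq_self ⟨x, hx⟩,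
    Submodule.starProjection_eq_self_iff.mpr hx]

end LinearIsometry

theorem exists_linearIsometry_prod_of_gram_eq {𝕜 ι E F : Type*} [RCLike 𝕜] [Fintype ι]
    [NormedAddCommGroup E] [InnerProductSpace 𝕜 E] [NormedAddCommGroup F] [InnerProductSpace 𝕜 F]
    {v : ι → E} {w : ι → F} (h : gram 𝕜 v = gram 𝕜 w) :
    ∃ U : E →ₗᵢ[𝕜] WithLp 2 (F × E), ∀ i, U (v i) = WithLp.toLp 2 (w i, 0) := by
  have := FiniteDimensional.span_of_finite 𝕜 (Set.finite_range v)
  obtain ⟨L, hL⟩ := exists_linearIsometry_span_of_gram_eq h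
  refine ⟨L.prodOrthogonal, fun i => ?_⟩
  rw [L.prodOrthogonal_apply_of_mem (Submodule.subset_span (Set.mem_range_self i)), hL]

theorem exists_isometric_realization_of_posSemidef_general {n : ℕ} {H K : Type*}
    [NormedAddCommGroup H] [InnerProductSpace ℂ H] [FiniteDimensional ℂ H]
    [NormedAddCommGroup K] [InnerProductSpace ℂ K] [FiniteDimensional ℂ K]
    (φ : Fin n → H) (χ : Fin n → K) (η : Fin n → ℝ)
    (hη : ∀ i, 0 ≤ η i)
    (hM : (Matrix.of fun i j =>
        (inner ℂ (φ i) (φ j) : ℂ)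
          - (Real.sqrt (η i * η j) : ℂ) * (inner ℂ (χ i) (χ j) : ℂ)).PosSemidef) :
    ∃ (W : Type) (_ : NormedAddCommGroup W) (_ : InnerProductSpace ℂ W)
      (_ : FiniteDimensional ℂ W) (U : H →ₗᵢ[ℂ] W) (J : K →ₗᵢ[ℂ] W)
      (β : Fin n → W),
        (∀ i, ∀ x : K, (inner ℂ (J x) (β i) : ℂ) = 0) ∧
        (∀ i, U (φ i) = (Real.sqrt (η i) : ℂ) • J (χ i) + β i) := by
  obtain ⟨b, hb⟩ := hM.exists_gram_eq
  -- `W` must live in `Type`, so `H` and `K` are first replaced by coordinate spaces.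
  let eH := (stdOrthonormalBasis ℂ H).repr
  let eK := (stdOrthonormalBasis ℂ K).repr
  have hgram : gram ℂ (eH ∘ φ) =
      gram ℂ (fun i => WithLp.toLp 2 ((Real.sqrt (η i) : ℂ) • eK (χ i), b i)) := by
    rw [gram_toLp_prod, hb]
    ext i j
    simp only [gram_apply, Matrix.add_apply, of_apply, Function.comp_apply,
      LinearIsometryEquiv.inner_map_map, inner_smul_left, inner_smul_right, Complex.conj_ofReal,
      Real.sqrt_mul (hη i), Complex.ofReal_mul]
    ring
  obtain ⟨U, hU⟩ := exists_linearIsometry_prod_of_gram_eq hgram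
  refine ⟨_, inferInstance, inferInstance, inferInstance, U.comp eH.toLinearIsometry,
    ((WithLp.inlₗᵢ 2 ℂ _ _).comp (WithLp.inlₗᵢ 2 ℂ _ _)).comp eK.toLinearIsometry,
    fun i => WithLp.toLp 2 (WithLp.toLp 2 (0, b i), 0), fun i x => ?_, fun i => (hU i).trans ?_⟩
  · simp [WithLp.prod_inner_apply]
  · change _ = (Real.sqrt (η i) : ℂ) • WithLp.toLp 2 (WithLp.toLp 2 (eK (χ i), 0), 0)
      + WithLp.toLp 2 (WithLp.toLp 2 (0, b i), 0)
    simp only [← WithLp.toLp_smul, ← WithLp.toLp_add, Prod.smul_mk, Prod.mk_add_mk, smul_zero,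
      add_zero, zero_add]

/-- sufficiency direction of the probabilistic transformation
condition. If the matrix `M` with entries `Mᵢⱼ = ⟨φᵢ, φⱼ⟩ − √(ηᵢ ηⱼ) ⟨χᵢ, χⱼ⟩` is
positive semidefinite, then there exists an isometric realization of the
transformation `φᵢ ↦ χᵢ` with success probabilities `ηᵢ`: a finite-dimensional
complex inner product space `W`, linear isometries `U : H → W` and `J : K → W`, and
vectors `β₁, …, βₙ ∈ W`, each orthogonal to the range of `J`, with
`U φᵢ = √ηᵢ • (J χᵢ) + βᵢ` for all `i`. -/
theorem exists_isometric_realization_of_posSemidef {n : ℕ} {H K : Type*}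
    [NormedAddCommGroup H] [InnerProductSpace ℂ H] [FiniteDimensional ℂ H]
    [NormedAddCommGroup K] [InnerProductSpace ℂ K] [FiniteDimensional ℂ K]
    (φ : Fin n → H) (χ : Fin n → K) (η : Fin n → ℝ)
    (hφ : ∀ i, ‖φ i‖ = 1) (hχ : ∀ i, ‖χ i‖ = 1) (hη : ∀ i, 0 ≤ η i)
    (hM : (Matrix.of fun i j =>
        (inner ℂ (φ i) (φ j) : ℂ)
          - (Real.sqrt (η i * η j) : ℂ) * (inner ℂ (χ i) (χ j) : ℂ)).PosSemidef) :
    ∃ (W : Type) (_ : NormedAddCommGroup W) (_ : InnerProductSpace ℂ W)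
      (_ : FiniteDimensional ℂ W) (U : H →ₗᵢ[ℂ] W) (J : K →ₗᵢ[ℂ] W)
      (β : Fin n → W),
        (∀ i, ∀ x : K, (inner ℂ (J x) (β i) : ℂ) = 0) ∧
        (∀ i, U (φ i) = (Real.sqrt (η i) : ℂ) • J (χ i) + β i) :=
  exists_isometric_realization_of_posSemidef_general φ χ η hη hM
end

section
/- (Linear independence of the inputs is necessary when the outputs are linearly independent.) Let H and H₂ be finite-dimensional complex inner product spaces, φ_1,…,φ_n ∈ H unit vectors with Gram matrix X, and ψ_1,…,ψ_n ∈ H₂ linearly independent unit vectors with Gram matrix Y. Let η_1,…,η_n > 0 and let A be an n×n complex positive semidefinite matrix with A_{ii} = 1 for all i. If the matrix with entries X_{ij} − √(η_i η_j) Y_{ij} A_{ij} is positive semidefinite, then X is positive definite; in particular φ_1,…,φ_n are linearly independent. -/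
/-!
The matrix `(√(ηᵢ ηⱼ) Yᵢⱼ Aᵢⱼ)` is the Hadamard product of the Gram matrix `Y`, which is positive
definite since the `ψᵢ` are independent, with the positive semidefinite matrix `(√(ηᵢ ηⱼ) Aᵢⱼ)`,
whose diagonal `(ηᵢ)` has no zero entry. Schur's product theorem strengthens to: such a product is
positive definite. So `X` is a positive semidefinite matrix plus a positive definite one.
-/

open scoped ComplexOrder

namespace Matrix

theorem star_dotProduct_hadamard_conjTranspose_mul_self_mulVec {ι κ R : Type*}
    [Fintype ι] [Fintype κ] [CommRing R] [StarRing R]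
    (Y : Matrix ι ι R) (B : Matrix κ ι R) (x : ι → R) :
    star x ⬝ᵥ (Y ⊙ (Bᴴ * B)) *ᵥ x = ∑ k, star (B k * x) ⬝ᵥ Y *ᵥ (B k * x) := by
  simp only [dotProduct, mulVec, hadamard_apply, mul_apply, conjTranspose_apply, Pi.star_apply,
    Pi.mul_apply, star_mul', Finset.mul_sum, Finset.sum_mul]
  refine (Finset.sum_congr rfl fun i _ => Finset.sum_comm).trans (Finset.sum_comm.trans ?_)
  refine Finset.sum_congr rfl fun k _ => Finset.sum_congr rfl fun i _ =>
    Finset.sum_congr rfl fun j _ => ?_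
  ring

theorem PosDef.hadamard_posSemidef {ι 𝕜 : Type*} [Fintype ι] [RCLike 𝕜]
    {Y A : Matrix ι ι 𝕜} (hY : Y.PosDef) (hA : A.PosSemidef) (hA0 : ∀ i, A i i ≠ 0) :
    (Y ⊙ A).PosDef := by
  classical
  refine .of_dotProduct_mulVec_pos (hY.isHermitian.hadamard hA.isHermitian) fun x hx => ?_
  obtain ⟨B, rfl⟩ : ∃ B : Matrix ι ι 𝕜, A = Bᴴ * B := by
    open scoped MatrixOrder in exact CStarAlgebra.nonneg_iff_eq_star_mul_self.mp hA.nonneg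
  rw [star_dotProduct_hadamard_conjTranspose_mul_self_mulVec]
  obtain ⟨i, hi⟩ := Function.ne_iff.mp hx
  -- `A i i = ∑ k, star (B k i) * B k i`, so column `i` of `B` is not zero.
  obtain ⟨k, hk⟩ : ∃ k, B k i ≠ 0 := by
    by_contra! h
    exact hA0 i (by simp [mul_apply, h])
  exact Finset.sum_pos' (fun k _ => hY.posSemidef.dotProduct_mulVec_nonneg _)
    ⟨k, Finset.mem_univ _, hY.dotProduct_mulVec_pos (Function.ne_iff.mpr ⟨i, mul_ne_zero hk hi⟩)⟩

end Matrix

open Matrix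

theorem inputs_linearIndependent_of_outputs_linearIndependent_general {n : ℕ}
    {H H₂ : Type*}
    [NormedAddCommGroup H] [InnerProductSpace ℂ H]
    [NormedAddCommGroup H₂] [InnerProductSpace ℂ H₂]
    (φ : Fin n → H) (ψ : Fin n → H₂)
    (hψli : LinearIndependent ℂ ψ)
    (η : Fin n → ℝ) (hη : ∀ i, 0 < η i)
    (A : Matrix (Fin n) (Fin n) ℂ) (hA : A.PosSemidef) (hA1 : ∀ i, A i i = 1)
    (hpsd : (Matrix.of fun i j =>
        (inner ℂ (φ i) (φ j) : ℂ)
          - (Real.sqrt (η i * η j) : ℂ) * (inner ℂ (ψ i) (ψ j) : ℂ)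
              * A i j).PosSemidef) :
    (Matrix.of fun i j => (inner ℂ (φ i) (φ j) : ℂ)).PosDef
      ∧ LinearIndependent ℂ φ := by
  set s : Fin n → ℂ := fun i => (Real.sqrt (η i) : ℂ)
  set Aη := A ⊙ vecMulVec s (star s)
  have hsqrt (i j : Fin n) : (Real.sqrt (η i * η j) : ℂ) = s i * star (s j) := by
    simp [s, Real.sqrt_mul (hη i).le]
  have hAη : Aη.PosSemidef := hA.hadamard (posSemidef_vecMulVec_self_star s)
  have hAη0 (i : Fin n) : Aη i i ≠ 0 := by
    simp [Aη, s, vecMulVec_apply, hA1, (Real.sqrt_pos.mpr (hη i)).ne']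
  have hM : (gram ℂ ψ ⊙ Aη).PosDef :=
    (posDef_gram_of_linearIndependent hψli).hadamard_posSemidef hAη hAη0
  have hX : gram ℂ φ = (Matrix.of fun i j => (inner ℂ (φ i) (φ j) : ℂ)
      - (Real.sqrt (η i * η j) : ℂ) * (inner ℂ (ψ i) (ψ j) : ℂ) * A i j) + gram ℂ ψ ⊙ Aη := by
    ext i j
    simp only [Aη, Matrix.add_apply, of_apply, hadamard_apply, gram_apply, vecMulVec_apply,
      Pi.star_apply, hsqrt]
    ring
  have hXpd : (gram ℂ φ).PosDef := hX ▸ PosDef.posSemidef_add hpsd hM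
  exact ⟨hXpd, linearIndependent_of_posDef_gram hXpd⟩

/-- linear independence of the inputs is necessary when the
outputs are linearly independent. If the output unit vectors `ψᵢ` are linearly
independent, the success probabilities `ηᵢ` are all positive, `A` is positive
semidefinite with unit diagonal, and the matrix with entries
`Xᵢⱼ − √(ηᵢ ηⱼ) Yᵢⱼ Aᵢⱼ` is positive semidefinite (where `X`, `Y` are the Gram
matrices of the inputs and outputs), then `X` is positive definite; in particular
the input vectors `φᵢ` are linearly independent. -/
theorem inputs_linearIndependent_of_outputs_linearIndependent {n : ℕ}
    {H H₂ : Type*}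
    [NormedAddCommGroup H] [InnerProductSpace ℂ H] [FiniteDimensional ℂ H]
    [NormedAddCommGroup H₂] [InnerProductSpace ℂ H₂] [FiniteDimensional ℂ H₂]
    (φ : Fin n → H) (ψ : Fin n → H₂)
    (hφ : ∀ i, ‖φ i‖ = 1) (hψ : ∀ i, ‖ψ i‖ = 1)
    (hψli : LinearIndependent ℂ ψ)
    (η : Fin n → ℝ) (hη : ∀ i, 0 < η i)
    (A : Matrix (Fin n) (Fin n) ℂ) (hA : A.PosSemidef) (hA1 : ∀ i, A i i = 1)
    (hpsd : (Matrix.of fun i j =>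
        (inner ℂ (φ i) (φ j) : ℂ)
          - (Real.sqrt (η i * η j) : ℂ) * (inner ℂ (ψ i) (ψ j) : ℂ)
              * A i j).PosSemidef) :
    (Matrix.of fun i j => (inner ℂ (φ i) (φ j) : ℂ)).PosDef
      ∧ LinearIndependent ℂ φ :=
  inputs_linearIndependent_of_outputs_linearIndependent_general φ ψ hψli η hη A hA hA1 hpsd
end

section
/- (Schur product with a positive definite matrix.) Let M be an n×n complex positive definite matrix and let N be an n×n complex positive semidefinite matrix all of whose diagonal entries are strictly positive. Then the Hadamard (entrywise) product M ∘ N is positive definite. -/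
/-!
Since `M` is positive definite, its spectrum is bounded below by some `r > 0`, so `M - r • 1` is
positive semidefinite. Then `M ∘ N = (M - r • 1) ∘ N + (r • 1) ∘ N`: the first summand is positive
semidefinite by the Schur product theorem, and the second is the diagonal matrix with positive
entries `r * N i i`.
-/

open scoped ComplexOrder
open Matrix

namespace Matrix

variable {ι 𝕜 : Type*} [Fintype ι] [DecidableEq ι] [RCLike 𝕜]

open scoped MatrixOrder in
theorem PosDef.exists_pos_posSemidef_sub_smul_one {A : Matrix ι ι 𝕜} (hA : A.PosDef) :
    ∃ r : ℝ, 0 < r ∧ (A - (r : 𝕜) • 1).PosSemidef := by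
  rcases subsingleton_or_nontrivial (Matrix ι ι 𝕜) with _ | _
  · exact ⟨1, one_pos, Subsingleton.elim 0 (A - _) ▸ .zero⟩
  obtain ⟨r, hr, hrA⟩ := (CFC.exists_pos_algebraMap_le_iff hA.isStrictlyPositive.isSelfAdjoint).2
    fun _ hx ↦ hA.isStrictlyPositive.spectrum_pos hx
  have hsmul : algebraMap ℝ (Matrix ι ι 𝕜) r = (r : 𝕜) • 1 := by
    rw [Algebra.algebraMap_eq_smul_one, ← RCLike.real_smul_eq_coe_smul]
  exact ⟨r, hr, hsmul ▸ Matrix.le_iff.mp hrA⟩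

theorem PosDef.hadamard_posSemidef_s9 {A B : Matrix ι ι 𝕜} (hA : A.PosDef) (hB : B.PosSemidef)
    (hB_diag : ∀ i, 0 < B i i) : (A ⊙ B).PosDef := by
  obtain ⟨r, hr, hAr⟩ := hA.exists_pos_posSemidef_sub_smul_one
  have hdiag : (((r : 𝕜) • 1) ⊙ B).PosDef := by
    rw [smul_hadamard, one_hadamard, ← diagonal_smul]
    exact .diagonal fun i ↦ mul_pos (by exact_mod_cast hr) (hB_diag i)
  convert hdiag.add_posSemidef (hAr.hadamard hB) using 1
  rw [← add_hadamard, add_sub_cancel]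

end Matrix

/-- Schur product with a positive definite matrix.
If `M` is positive definite and `N` is positive semidefinite with strictly
positive diagonal entries, then the Hadamard (entrywise) product `M ∘ N` is
positive definite. -/
theorem hadamard_posDef_of_posDef_of_posSemidef {n : ℕ}
    (M N : Matrix (Fin n) (Fin n) ℂ)
    (hM : M.PosDef) (hN : N.PosSemidef) (hNdiag : ∀ i, 0 < N i i) :
    (Matrix.hadamard M N).PosDef :=
  hM.hadamard_posSemidef_s9 hN hNdiag
end

section
/- (Bound on the average success probability for two states.) Let η₁, η₂ ∈ [0,1], let p₁, p₂ ≥ 0 with p₁ + p₂ = 1, and let x, y ∈ ℂ with |y| < 1. Suppose √((1−η₁)(1−η₂)) ≥ |x| − √(η₁η₂)·|y|. Then p₁η₁ + p₂η₂ ≤ (1 − 2√(p₁p₂)·|x|) / (1 − |y|). -/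
/-! By AM–GM, `2√(p₁p₂)√(ab) ≤ p₁a + p₂b` for `a, b ≥ 0`. Applied to both square roots in
the hypothesis this gives `2√(p₁p₂)|x| ≤ (p₁(1-η₁) + p₂(1-η₂)) + P|y| = 1 - P + P|y|` for
`P = p₁η₁ + p₂η₂`, which rearranges to the bound because `|y| < 1`. -/

lemma two_mul_sqrt_mul_mul_sqrt_mul_le {a b c d : ℝ} (ha : 0 ≤ a) (hb : 0 ≤ b) (hc : 0 ≤ c)
    (hd : 0 ≤ d) : 2 * (Real.sqrt (a * b) * Real.sqrt (c * d)) ≤ a * c + b * d := by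
  have hsplit : Real.sqrt (a * b) * Real.sqrt (c * d)
      = Real.sqrt (a * c) * Real.sqrt (b * d) := by
    rw [← Real.sqrt_mul (by positivity), ← Real.sqrt_mul (by positivity)]
    ring_nf
  rw [hsplit, ← mul_assoc]
  calc 2 * Real.sqrt (a * c) * Real.sqrt (b * d)
      ≤ Real.sqrt (a * c) ^ 2 + Real.sqrt (b * d) ^ 2 := two_mul_le_add_sq _ _
    _ = a * c + b * d := by
      rw [Real.sq_sqrt (mul_nonneg ha hc), Real.sq_sqrt (mul_nonneg hb hd)]

/-- bound on the average success probability for two states.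
If `√((1−η₁)(1−η₂)) ≥ |x| − √(η₁η₂)|y|` with `|y| < 1`, priors `p₁ + p₂ = 1`,
then the whole success probability satisfies
`p₁η₁ + p₂η₂ ≤ (1 − 2√(p₁p₂)|x|)/(1 − |y|)`. -/
theorem average_success_probability_bound (η₁ η₂ p₁ p₂ : ℝ) (x y : ℂ)
    (hη₁ : η₁ ∈ Set.Icc (0 : ℝ) 1) (hη₂ : η₂ ∈ Set.Icc (0 : ℝ) 1)
    (hp₁ : 0 ≤ p₁) (hp₂ : 0 ≤ p₂) (hp : p₁ + p₂ = 1)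
    (hy : ‖y‖ < 1)
    (h : Real.sqrt ((1 - η₁) * (1 - η₂))
        ≥ ‖x‖ - Real.sqrt (η₁ * η₂) * ‖y‖) :
    p₁ * η₁ + p₂ * η₂
      ≤ (1 - 2 * Real.sqrt (p₁ * p₂) * ‖x‖) / (1 - ‖y‖) := by
  obtain ⟨hη₁0, hη₁1⟩ := hη₁
  obtain ⟨hη₂0, hη₂1⟩ := hη₂
  set s := Real.sqrt (p₁ * p₂)
  have hfail : 2 * (s * Real.sqrt ((1 - η₁) * (1 - η₂))) ≤ p₁ * (1 - η₁) + p₂ * (1 - η₂) :=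
    two_mul_sqrt_mul_mul_sqrt_mul_le hp₁ hp₂ (by linarith) (by linarith)
  have hsucc : 2 * (s * Real.sqrt (η₁ * η₂)) ≤ p₁ * η₁ + p₂ * η₂ :=
    two_mul_sqrt_mul_mul_sqrt_mul_le hp₁ hp₂ hη₁0 hη₂0
  have hx : 2 * s * ‖x‖ ≤ 1 - (p₁ * η₁ + p₂ * η₂) + (p₁ * η₁ + p₂ * η₂) * ‖y‖ :=
    calc 2 * s * ‖x‖
        ≤ 2 * s * (Real.sqrt ((1 - η₁) * (1 - η₂)) + Real.sqrt (η₁ * η₂) * ‖y‖) := by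
          gcongr; linarith
      _ = 2 * (s * Real.sqrt ((1 - η₁) * (1 - η₂))) + 2 * (s * Real.sqrt (η₁ * η₂)) * ‖y‖ := by
          ring
      _ ≤ (p₁ * (1 - η₁) + p₂ * (1 - η₂)) + (p₁ * η₁ + p₂ * η₂) * ‖y‖ := by
          gcongr
      _ = 1 - (p₁ * η₁ + p₂ * η₂) + (p₁ * η₁ + p₂ * η₂) * ‖y‖ := by
          linear_combination hp
  rw [le_div_iff₀ (by linarith)]
  linarith
end
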